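/- If α̃ and α satisfy α̃(2n) = α̃(n) + α(n) + 3n − 1 and α(2n) = 2α(n) + 3n − 1 along the chain n = q·2^j for j < m, then α̃(q·2^m) = α̃(q) + (2^m − 1)·α(q) + 3m·q·2^(m−1) − 2^m + 1. -/

import Mathlib

/-! Along the chain `n = q·2^j` both recurrences are first-order linear recurrences in `j`
with forcing term `3q·2^j − 1`. The unscaled one has the homogeneous solution `2^j`, giving
`α(q·2^m) = 2^m α(q) + 3mq·2^(m−1) − 2^m + 1`; the scaled one is then a telescoping sum of
these values, which closes up to the stated formula. -/

lemma natCast_mul_two_pow_sub_one_mul_two (m : ℕ) :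
    (m : ℤ) * 2 ^ (m - 1) * 2 = m * 2 ^ m := by
  rcases m with _ | k
  · simp
  · simp only [Nat.add_sub_cancel, pow_succ]
    ring

theorem doubling_recurrence_closed_form {a : ℕ → ℤ} {c : ℤ} {m : ℕ}
    (h : ∀ j < m, a (j + 1) = 2 * a j + c * 2 ^ j - 1) :
    a m = 2 ^ m * a 0 + m * c * 2 ^ (m - 1) - 2 ^ m + 1 := by
  induction m with
  | zero => simp
  | succ m ih =>
    rw [h m m.lt_succ_self, ih fun j hj => h j (hj.trans m.lt_succ_self), Nat.add_sub_cancel]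
    push_cast
    linear_combination c * natCast_mul_two_pow_sub_one_mul_two m

theorem accumulated_recurrence_closed_form {s a : ℕ → ℤ} {c : ℤ} {m : ℕ}
    (hs : ∀ j < m, s (j + 1) = s j + a j + c * 2 ^ j - 1)
    (ha : ∀ j < m, a (j + 1) = 2 * a j + c * 2 ^ j - 1) :
    s m = s 0 + (2 ^ m - 1) * a 0 + m * c * 2 ^ (m - 1) - 2 ^ m + 1 := by
  induction m with
  | zero => simp
  | succ m ih =>
    have ha' : ∀ j < m, a (j + 1) = 2 * a j + c * 2 ^ j - 1 :=
      fun j hj => ha j (hj.trans m.lt_succ_self)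
    rw [hs m m.lt_succ_self, ih (fun j hj => hs j (hj.trans m.lt_succ_self)) ha',
      doubling_recurrence_closed_form ha', Nat.add_sub_cancel]
    push_cast
    linear_combination c * natCast_mul_two_pow_sub_one_mul_two m

theorem scaled_kok_add_count_general (q m : ℕ) (αs α : ℕ → ℤ)
    (hrecs : ∀ j < m, αs (q * 2 ^ (j + 1)) =
      αs (q * 2 ^ j) + α (q * 2 ^ j) + 3 * (q * 2 ^ j : ℕ) - 1)
    (hrec : ∀ j < m, α (q * 2 ^ (j + 1)) =
      2 * α (q * 2 ^ j) + 3 * (q * 2 ^ j : ℕ) - 1) :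
    αs (q * 2 ^ m) =
      αs q + (2 ^ m - 1) * α q + 3 * m * q * 2 ^ (m - 1) - 2 ^ m + 1 := by
  have forcing (j : ℕ) : (3 * (q * 2 ^ j : ℕ) : ℤ) = 3 * q * 2 ^ j := by push_cast; ring
  have closed := accumulated_recurrence_closed_form (s := fun j => αs (q * 2 ^ j))
    (a := fun j => α (q * 2 ^ j)) (c := 3 * q) (m := m)
    (fun j hj => by simpa only [forcing] using hrecs j hj)
    (fun j hj => by simpa only [forcing] using hrec j hj)
  simp only [pow_zero, mul_one] at closed
  rw [closed]
  ring

theorem scaled_kok_add_count (q m : ℕ) (hq : 1 ≤ q) (αs α : ℕ → ℤ)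
    (hrecs : ∀ j < m, αs (q * 2 ^ (j + 1)) =
      αs (q * 2 ^ j) + α (q * 2 ^ j) + 3 * (q * 2 ^ j : ℕ) - 1)
    (hrec : ∀ j < m, α (q * 2 ^ (j + 1)) =
      2 * α (q * 2 ^ j) + 3 * (q * 2 ^ j : ℕ) - 1) :
    αs (q * 2 ^ m) =
      αs q + (2 ^ m - 1) * α q + 3 * m * q * 2 ^ (m - 1) - 2 ^ m + 1 :=
  scaled_kok_add_count_general q m αs α hrecs hrec
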